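/- arXiv:1803.01917 — 2 statements merged into one kernel-verified Lean document; each statement's English description precedes it below -/
import Mathlib

section
/- Let Γ be a finitely generated group with Cayley graph G, and let A = ∪_{n≥1} A_n where A_0 = {e}, A_n = A_{n−1} ∪ γ_n A_{n−1} with d_G(e, γ_n) = 3·10^n. Then every non-identity element of A can be written uniquely as a product γ_{n_k} γ_{n_{k−1}} ⋯ γ_{n_1} with n_k > n_{k−1} > ⋯ > n_1. -/
open scoped Pointwise

/-- Word metric of the Cayley graph `Cay(Γ, S)`. -/
noncomputable def wordDist {Γ : Type*} [Group Γ] (S : Set Γ) (γ δ : Γ) : ℕ :=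
  sInf {n | ∃ l : List Γ, (∀ s ∈ l, s ∈ S) ∧ l.length = n ∧ γ * l.prod = δ}

/-!
Write `|g|` for the word length. A product of `γ_i` over distinct indices `i < h` has length at
most `∑_{i<h} 3·10^i`, which is less than half of `|γ_h| = 3·10^h`. If two decreasing index lists
had the same product, then after cancelling their common leading factors the larger of the two
leading indices `h` would express `γ_h` as a quotient of two such products, of length `< 3·10^h`.
Existence is immediate from the recursive description of `A_n`.
-/

section WordLength

variable {Γ : Type*} [Group Γ] {S : Set Γ}

-- Upper bounds are stated through words rather than `wordDist`, which is the junk value `0`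
-- for elements that are not products of elements of `S`.
variable (S) in
def WordLengthLE (g : Γ) (L : ℕ) : Prop :=
  ∃ w : List Γ, (∀ s ∈ w, s ∈ S) ∧ w.length ≤ L ∧ w.prod = g

theorem wordLengthLE_one : WordLengthLE S (1 : Γ) 0 :=
  ⟨[], by simp, le_rfl, rfl⟩

theorem WordLengthLE.mul {a b : Γ} {L M : ℕ} (ha : WordLengthLE S a L)
    (hb : WordLengthLE S b M) : WordLengthLE S (a * b) (L + M) := by
  obtain ⟨v, hvS, hv, rfl⟩ := ha
  obtain ⟨w, hwS, hw, rfl⟩ := hb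
  refine ⟨v ++ w, ?_, by simpa using add_le_add hv hw, List.prod_append⟩
  simpa only [List.mem_append, or_imp, forall_and] using ⟨hvS, hwS⟩

theorem WordLengthLE.inv (hS : ∀ s ∈ S, s⁻¹ ∈ S) {g : Γ} {L : ℕ} (h : WordLengthLE S g L) :
    WordLengthLE S g⁻¹ L := by
  obtain ⟨w, hwS, hw, rfl⟩ := h
  refine ⟨(w.map (·⁻¹)).reverse, ?_, by simpa using hw, (List.prod_inv_reverse w).symm⟩
  simpa using fun s hs => inv_inv s ▸ hS _ (hwS _ hs)

theorem WordLengthLE.list_prod {ι : Type*} {f : ι → Γ} {c : ι → ℕ} {l : List ι}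
    (h : ∀ i ∈ l, WordLengthLE S (f i) (c i)) :
    WordLengthLE S (l.map f).prod (l.map c).sum := by
  induction l with
  | nil => exact wordLengthLE_one
  | cons i l ih =>
    simp only [List.map_cons, List.prod_cons, List.sum_cons]
    exact (h i List.mem_cons_self).mul (ih fun j hj => h j (List.mem_cons_of_mem i hj))

theorem WordLengthLE.wordDist_le {g : Γ} {L : ℕ} (h : WordLengthLE S g L) :
    wordDist S 1 g ≤ L := by
  obtain ⟨w, hwS, hw, hwg⟩ := h
  refine (Nat.sInf_le ?_).trans hw
  exact ⟨w, hwS, rfl, by rw [one_mul, hwg]⟩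

theorem wordLengthLE_wordDist {g : Γ} (h : wordDist S 1 g ≠ 0) :
    WordLengthLE S g (wordDist S 1 g) := by
  have hne : {n | ∃ w : List Γ, (∀ s ∈ w, s ∈ S) ∧ w.length = n ∧ 1 * w.prod = g}.Nonempty :=
    Set.nonempty_iff_ne_empty.2 fun hempty => h (by rw [wordDist, hempty, Nat.sInf_empty])
  obtain ⟨w, hwS, hw, hwg⟩ := Nat.sInf_mem hne
  exact ⟨w, hwS, hw.le, by rwa [one_mul] at hwg⟩

end WordLength

theorem two_mul_sum_three_mul_ten_pow_lt {l : List ℕ} {h : ℕ} (hl : l.Nodup)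
    (hlh : ∀ i ∈ l, i < h) : 2 * (l.map fun i => 3 * 10 ^ i).sum < 3 * 10 ^ h := by
  have hsub : (l.map fun i => 3 * 10 ^ i).sum ≤ ∑ i ∈ Finset.range h, 3 * 10 ^ i := by
    rw [← List.sum_toFinset _ hl]
    exact Finset.sum_le_sum_of_subset fun i hi =>
      Finset.mem_range.2 (hlh i (List.mem_toFinset.1 hi))
  have hgeom := geom_sum_mul_add 9 h
  rw [← Finset.mul_sum] at hsub
  norm_num at hgeom
  omega

section Sparse

variable {Γ : Type*} [Group Γ] {S : Set Γ} {γ : ℕ → Γ}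

theorem exists_prod_eq_of_mem {A : ℕ → Set Γ} (hA0 : A 0 = {1})
    (hAn : ∀ n : ℕ, A (n + 1) = A n ∪ (γ (n + 1)) • A n) (n : ℕ) :
    ∀ g ∈ A n, ∃ l : List ℕ, l.Pairwise (· > ·) ∧ (∀ i ∈ l, 1 ≤ i ∧ i ≤ n) ∧
      (l.map γ).prod = g := by
  induction n with
  | zero =>
    intro g hg
    rw [hA0, Set.mem_singleton_iff] at hg
    exact ⟨[], List.Pairwise.nil, by simp, hg.symm⟩
  | succ n ih =>
    intro g hg
    rw [hAn n] at hg
    rcases hg with hg | ⟨a, ha, rfl⟩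
    · obtain ⟨l, hl, hln, rfl⟩ := ih g hg
      exact ⟨l, hl, fun i hi => ⟨(hln i hi).1, (hln i hi).2.trans n.le_succ⟩, rfl⟩
    · obtain ⟨l, hl, hln, rfl⟩ := ih a ha
      refine ⟨(n + 1) :: l, List.pairwise_cons.2 ⟨fun i hi => ?_, hl⟩, ?_, rfl⟩
      · exact Nat.lt_succ_of_le (hln i hi).2
      · simpa using fun i hi => ⟨(hln i hi).1, (hln i hi).2.trans n.le_succ⟩

variable (hS : ∀ s ∈ S, s⁻¹ ∈ S) (hγ : ∀ n : ℕ, 1 ≤ n → wordDist S 1 (γ n) = 3 * 10 ^ n)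
include hγ

theorem wordLengthLE_prod_gamma {l : List ℕ} (hl : ∀ i ∈ l, 1 ≤ i) :
    WordLengthLE S (l.map γ).prod (l.map fun i => 3 * 10 ^ i).sum :=
  WordLengthLE.list_prod fun i hi => hγ i (hl i hi) ▸
    wordLengthLE_wordDist (by rw [hγ i (hl i hi)]; positivity)

include hS

theorem prod_gamma_cons_ne {h : ℕ} {t l : List ℕ} (hht : (h :: t).Pairwise (· > ·))
    (hht1 : ∀ i ∈ h :: t, 1 ≤ i) (hl : l.Pairwise (· > ·)) (hl1 : ∀ i ∈ l, 1 ≤ i)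
    (hlh : ∀ i ∈ l, i < h) : ((h :: t).map γ).prod ≠ (l.map γ).prod := by
  intro heq
  obtain ⟨hth, ht⟩ := List.pairwise_cons.1 hht
  have ht1 : ∀ i ∈ t, 1 ≤ i := fun i hi => hht1 i (List.mem_cons_of_mem h hi)
  have hγh : γ h = (l.map γ).prod * ((t.map γ).prod)⁻¹ := by
    rw [← heq, List.map_cons, List.prod_cons, mul_inv_cancel_right]
  have hlen := (hγh ▸ (wordLengthLE_prod_gamma hγ hl1).mul
    ((wordLengthLE_prod_gamma hγ ht1).inv hS)).wordDist_le
  have hlsum := two_mul_sum_three_mul_ten_pow_lt hl.nodup hlh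
  have htsum := two_mul_sum_three_mul_ten_pow_lt ht.nodup hth
  rw [hγ h (hht1 h List.mem_cons_self)] at hlen
  omega

theorem eq_of_prod_gamma_eq {l l' : List ℕ} (hl : l.Pairwise (· > ·))
    (hl' : l'.Pairwise (· > ·)) (hl1 : ∀ i ∈ l, 1 ≤ i) (hl1' : ∀ i ∈ l', 1 ≤ i)
    (heq : (l.map γ).prod = (l'.map γ).prod) : l = l' := by
  induction l generalizing l' with
  | nil =>
    cases l' with
    | nil => rfl
    | cons h' t' =>
      exact absurd heq.symm (prod_gamma_cons_ne hS hγ hl' hl1' hl hl1 (by simp))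
  | cons h t ih =>
    cases l' with
    | nil => exact absurd heq (prod_gamma_cons_ne hS hγ hl hl1 hl' hl1' (by simp))
    | cons h' t' =>
      rcases lt_trichotomy h h' with hlt | rfl | hgt
      · refine absurd heq.symm (prod_gamma_cons_ne hS hγ hl' hl1' hl hl1 ?_)
        simpa using ⟨hlt, fun i hi => (List.rel_of_pairwise_cons hl hi).trans hlt⟩
      · simp only [List.map_cons, List.prod_cons, mul_right_inj] at heq
        rw [ih hl.of_cons hl'.of_cons (fun i hi => hl1 i (List.mem_cons_of_mem h hi))
          (fun i hi => hl1' i (List.mem_cons_of_mem h hi)) heq]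
      · refine absurd heq (prod_gamma_cons_ne hS hγ hl hl1 hl' hl1' ?_)
        simpa using ⟨hgt, fun i hi => (List.rel_of_pairwise_cons hl' hi).trans hgt⟩

end Sparse

theorem stmt5_general {Γ : Type*} [Group Γ] (S : Set Γ)
    (hSsym : ∀ s ∈ S, s⁻¹ ∈ S)
    (γ : ℕ → Γ) (hγ : ∀ n : ℕ, 1 ≤ n → wordDist S 1 (γ n) = 3 * 10 ^ n)
    (A : ℕ → Set Γ) (hA0 : A 0 = {1})
    (hAn : ∀ n : ℕ, A (n + 1) = A n ∪ (γ (n + 1)) • A n) :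
    ∀ g ∈ ⋃ n, A n, g ≠ 1 →
      ∃! l : List ℕ, l ≠ [] ∧ l.Chain' (· > ·) ∧ (∀ i ∈ l, 1 ≤ i) ∧ (l.map γ).prod = g := by
  intro g hg hg1
  obtain ⟨n, hgn⟩ := Set.mem_iUnion.1 hg
  obtain ⟨l, hl, hln, rfl⟩ := exists_prod_eq_of_mem hA0 hAn n g hgn
  have hl1 : ∀ i ∈ l, 1 ≤ i := fun i hi => (hln i hi).1
  refine ⟨l, ⟨?_, List.isChain_iff_pairwise.2 hl, hl1, rfl⟩, ?_⟩
  · rintro rfl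
    exact hg1 rfl
  · rintro l' ⟨-, hl', hl1', heq⟩
    exact eq_of_prod_gamma_eq hSsym hγ (List.isChain_iff_pairwise.1 hl') hl hl1' hl1 heq

/-- with `A_0 = {e}`, `A_n = A_{n−1} ∪ γ_n A_{n−1}` and `d_G(e, γ_n) = 3·10^n`,
every non-identity element of `A = ⋃ A_n` is uniquely a product `γ_{n_k} ⋯ γ_{n_1}` with
`n_k > ⋯ > n_1 ≥ 1`. -/
theorem stmt5 {Γ : Type*} [Group Γ] (S : Set Γ)
    (hSfin : S.Finite) (hSsym : ∀ s ∈ S, s⁻¹ ∈ S) (hSgen : Subgroup.closure S = ⊤)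
    (γ : ℕ → Γ) (hγ : ∀ n : ℕ, 1 ≤ n → wordDist S 1 (γ n) = 3 * 10 ^ n)
    (A : ℕ → Set Γ) (hA0 : A 0 = {1})
    (hAn : ∀ n : ℕ, A (n + 1) = A n ∪ (γ (n + 1)) • A n) :
    ∀ g ∈ ⋃ n, A n, g ≠ 1 →
      ∃! l : List ℕ, l ≠ [] ∧ l.Chain' (· > ·) ∧ (∀ i ∈ l, 1 ≤ i) ∧ (l.map γ).prod = g :=
  stmt5_general S hSsym γ hγ A hA0 hAn
end

section
/- With A, Q_n as follows: A_0 = {e}, A_n = A_{n−1} ∪ γ_n A_{n−1} with d_G(e, γ_n) = 3·10^n, A = ∪ A_n, and Q_n = {e} ∪ {γ_{n_k}⋯γ_{n_1} ∈ A : n_1 ≥ n}: if γ, δ are distinct elements of Q_n, then the balls B_{10^n}(G, γ) and B_{10^n}(G, δ) of radius 10^n in the Cayley graph are disjoint. -/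
open scoped Pointwise

/-!
Write `|g| = wordDist S 1 g` and `P l = γ_{i₁} ⋯ γ_{i_k}` for a strictly decreasing list
`l = [i₁, …, i_k]`. If every index is below `m`, then `|P l| ≤ 3 ∑ 10^i < 10^m / 3`, while `|γ_m| = 3·10^m`. Hence two products whose
lists first differ at an index `m` (one list has `m` there, the other only smaller indices) are
more than `2·10^m` apart; cancelling the common prefix by left invariance reduces every pair of
distinct products to this case. Balls of radius `10^n` around points at distance `> 2·10^n` are
disjoint.
-/

section WordDist

variable {Γ : Type*} [Group Γ] {S : Set Γ}

lemma wordDist_le_length {a b : Γ} (l : List Γ) (hl : ∀ s ∈ l, s ∈ S) (hab : a * l.prod = b) :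
    wordDist S a b ≤ l.length :=
  Nat.sInf_le ⟨l, hl, rfl, hab⟩

lemma wordDist_mul_left (g a b : Γ) : wordDist S (g * a) (g * b) = wordDist S a b := by
  simp only [wordDist, mul_assoc, mul_right_inj]

variable (hSsym : ∀ s ∈ S, s⁻¹ ∈ S) (hSgen : Subgroup.closure S = ⊤)
include hSsym hSgen

lemma exists_list_prod_eq (a b : Γ) : ∃ l : List Γ, (∀ s ∈ l, s ∈ S) ∧ a * l.prod = b := by
  have hS : S ∪ S⁻¹ = S := Set.union_eq_self_of_subset_right fun s hs => by
    simpa using hSsym s⁻¹ hs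
  have hmem : a⁻¹ * b ∈ Submonoid.closure S := by
    rw [← hS, ← Subgroup.closure_toSubmonoid, hSgen]
    trivial
  obtain ⟨l, hl, hprod⟩ := Submonoid.exists_list_of_mem_closure hmem
  exact ⟨l, hl, by rw [hprod, mul_inv_cancel_left]⟩

lemma exists_list_length_eq_wordDist (a b : Γ) :
    ∃ l : List Γ, (∀ s ∈ l, s ∈ S) ∧ l.length = wordDist S a b ∧ a * l.prod = b := by
  obtain ⟨l, hl, hab⟩ := exists_list_prod_eq hSsym hSgen a b
  exact Nat.sInf_mem
    (s := {n | ∃ l : List Γ, (∀ s ∈ l, s ∈ S) ∧ l.length = n ∧ a * l.prod = b})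
    ⟨l.length, l, hl, rfl, hab⟩

lemma wordDist_triangle (a b c : Γ) : wordDist S a c ≤ wordDist S a b + wordDist S b c := by
  obtain ⟨l₁, hl₁, hlen₁, hab⟩ := exists_list_length_eq_wordDist hSsym hSgen a b
  obtain ⟨l₂, hl₂, hlen₂, hbc⟩ := exists_list_length_eq_wordDist hSsym hSgen b c
  calc wordDist S a c ≤ (l₁ ++ l₂).length :=
        wordDist_le_length _ (fun s hs => (List.mem_append.mp hs).elim (hl₁ s) (hl₂ s))
          (by rw [List.prod_append, ← mul_assoc, hab, hbc])
    _ = wordDist S a b + wordDist S b c := by rw [List.length_append, hlen₁, hlen₂]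

lemma wordDist_comm (a b : Γ) : wordDist S a b = wordDist S b a := by
  have key : ∀ a b : Γ, wordDist S b a ≤ wordDist S a b := fun a b => by
    obtain ⟨l, hl, hlen, hab⟩ := exists_list_length_eq_wordDist hSsym hSgen a b
    calc wordDist S b a ≤ (l.map (·⁻¹)).reverse.length :=
          wordDist_le_length _
            (by
              simp only [List.mem_reverse, List.mem_map]
              rintro _ ⟨s, hs, rfl⟩
              exact hSsym s (hl s hs))
            (by rw [← List.prod_inv_reverse, ← hab, mul_inv_cancel_right])
      _ = wordDist S a b := by simp [hlen]
  exact le_antisymm (key b a) (key a b)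

lemma wordDist_one_list_prod_le (l : List Γ) :
    wordDist S 1 l.prod ≤ (l.map (wordDist S 1)).sum := by
  induction l with
  | nil => simpa using wordDist_le_length (S := S) (a := 1) [] (by simp) (by simp)
  | cons g l ih =>
    calc wordDist S 1 (g * l.prod) ≤ wordDist S 1 g + wordDist S g (g * l.prod) :=
          wordDist_triangle hSsym hSgen _ _ _
      _ ≤ wordDist S 1 g + (l.map (wordDist S 1)).sum := by
          rw [← mul_one g, mul_assoc, one_mul, wordDist_mul_left]; omega

end WordDist

lemma nine_mul_sum_pow_ten_lt {l : List ℕ} (hl : l.Pairwise (· > ·)) {m : ℕ}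
    (hlm : ∀ i ∈ l, i < m) : 9 * (l.map (10 ^ ·)).sum < 10 ^ m := by
  induction l generalizing m with
  | nil => simp only [List.map_nil, List.sum_nil, mul_zero]; positivity
  | cons a l ih =>
    obtain ⟨hal, hl⟩ := List.pairwise_cons.mp hl
    have hlt : 9 * (l.map (10 ^ ·)).sum < 10 ^ a := ih hl hal
    have hle : 10 ^ (a + 1) ≤ 10 ^ m :=
      Nat.pow_le_pow_right (by norm_num) (hlm a List.mem_cons_self)
    simp only [List.map_cons, List.sum_cons]
    rw [pow_succ] at hle
    omega

section Separation

variable {Γ : Type*} [Group Γ] {S : Set Γ}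
  (hSsym : ∀ s ∈ S, s⁻¹ ∈ S) (hSgen : Subgroup.closure S = ⊤)
  {γ : ℕ → Γ} {n : ℕ} (hγ : ∀ i, n ≤ i → wordDist S 1 (γ i) = 3 * 10 ^ i)
include hSsym hSgen hγ

lemma three_mul_wordDist_one_prod_lt {l : List ℕ} (hl : l.Pairwise (· > ·))
    (hln : ∀ i ∈ l, n ≤ i) {m : ℕ} (hlm : ∀ i ∈ l, i < m) :
    3 * wordDist S 1 (l.map γ).prod < 10 ^ m := by
  have hsum : (l.map (wordDist S 1 ∘ γ)).sum = 3 * (l.map (10 ^ ·)).sum := by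
    rw [← List.sum_map_mul_left]
    exact congrArg List.sum (List.map_congr_left fun i hi => hγ i (hln i hi))
  have hle := wordDist_one_list_prod_le hSsym hSgen (l.map γ)
  rw [List.map_map, hsum] at hle
  have := nine_mul_sum_pow_ten_lt hl hlm
  omega

lemma two_mul_pow_lt_wordDist_of_lt_head {l t : List ℕ} {m : ℕ}
    (hl : l.Pairwise (· > ·)) (hln : ∀ i ∈ l, n ≤ i) (hlm : ∀ i ∈ l, i < m)
    (ht : (m :: t).Pairwise (· > ·)) (htn : ∀ i ∈ m :: t, n ≤ i) :
    2 * 10 ^ m < wordDist S (l.map γ).prod ((m :: t).map γ).prod := by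
  obtain ⟨htm, ht⟩ := List.pairwise_cons.mp ht
  rw [List.map_cons, List.prod_cons]
  have hp := three_mul_wordDist_one_prod_lt hSsym hSgen hγ hl hln hlm
  have hq := three_mul_wordDist_one_prod_lt hSsym hSgen hγ ht
    (fun i hi => htn i (List.mem_cons_of_mem m hi)) htm
  set p := (l.map γ).prod
  set q := (t.map γ).prod
  have hqγ : wordDist S (γ m * q) (γ m) = wordDist S 1 q := by
    have := wordDist_mul_left (S := S) (γ m) q 1
    rwa [mul_one, wordDist_comm hSsym hSgen q 1] at this
  have h₁ := wordDist_triangle hSsym hSgen 1 p (γ m * q)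
  have h₂ := wordDist_triangle hSsym hSgen 1 (γ m * q) (γ m)
  rw [hqγ, hγ m (htn m List.mem_cons_self)] at h₂
  omega

lemma two_mul_pow_lt_wordDist_of_prod_ne {l₁ l₂ : List ℕ}
    (h₁ : l₁.Pairwise (· > ·)) (h₂ : l₂.Pairwise (· > ·))
    (hn₁ : ∀ i ∈ l₁, n ≤ i) (hn₂ : ∀ i ∈ l₂, n ≤ i)
    (hne : (l₁.map γ).prod ≠ (l₂.map γ).prod) :
    2 * 10 ^ n < wordDist S (l₁.map γ).prod (l₂.map γ).prod := by
  have lead : ∀ {l t : List ℕ} {m : ℕ}, l.Pairwise (· > ·) → (∀ i ∈ l, n ≤ i) →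
      (∀ i ∈ l, i < m) → (m :: t).Pairwise (· > ·) → (∀ i ∈ m :: t, n ≤ i) →
      2 * 10 ^ n < wordDist S (l.map γ).prod ((m :: t).map γ).prod :=
    fun hl hln hlm ht htn => by
      have hpow := Nat.pow_le_pow_right (by norm_num : 0 < 10) (htn _ List.mem_cons_self)
      have := two_mul_pow_lt_wordDist_of_lt_head hSsym hSgen hγ hl hln hlm ht htn
      omega
  have below {m : ℕ} {l : List ℕ} (hl : (m :: l).Pairwise (· > ·)) {k : ℕ} (hmk : m < k) :
      ∀ i ∈ m :: l, i < k := by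
    simpa using ⟨hmk, fun i hi => (List.rel_of_pairwise_cons hl hi).trans hmk⟩
  induction l₁ generalizing l₂ with
  | nil =>
    cases l₂ with
    | nil => exact absurd rfl hne
    | cons m t => exact lead List.Pairwise.nil (by simp) (by simp) h₂ hn₂
  | cons m₁ t₁ ih =>
    cases l₂ with
    | nil =>
      rw [wordDist_comm hSsym hSgen]
      exact lead List.Pairwise.nil (by simp) (by simp) h₁ hn₁
    | cons m₂ t₂ =>
      rcases lt_trichotomy m₁ m₂ with hlt | rfl | hgt
      · exact lead h₁ hn₁ (below h₁ hlt) h₂ hn₂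
      · simp only [List.map_cons, List.prod_cons, wordDist_mul_left, ne_eq, mul_right_inj]
          at hne ⊢
        exact ih (List.pairwise_cons.mp h₁).2 (List.pairwise_cons.mp h₂).2
          (fun i hi => hn₁ i (List.mem_cons_of_mem _ hi))
          (fun i hi => hn₂ i (List.mem_cons_of_mem _ hi)) hne
      · rw [wordDist_comm hSsym hSgen]
        exact lead h₂ hn₂ (below h₂ hgt) h₁ hn₁

end Separation

theorem stmt6_general {Γ : Type*} [Group Γ] (S : Set Γ)
    (hSsym : ∀ s ∈ S, s⁻¹ ∈ S) (hSgen : Subgroup.closure S = ⊤)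
    (γ : ℕ → Γ) (hγ : ∀ n : ℕ, 1 ≤ n → wordDist S 1 (γ n) = 3 * 10 ^ n)
    (Q : ℕ → Set Γ)
    (hQ : ∀ n : ℕ, Q n = {1} ∪ {g | ∃ l : List ℕ,
      l ≠ [] ∧ l.Chain' (· > ·) ∧ (∀ i ∈ l, n ≤ i) ∧ (l.map γ).prod = g}) :
    ∀ n : ℕ, 1 ≤ n → ∀ a ∈ Q n, ∀ b ∈ Q n, a ≠ b →
      ∀ x : Γ, ¬ (wordDist S a x ≤ 10 ^ n ∧ wordDist S b x ≤ 10 ^ n) := by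
  intro n hn a ha b hb hab x ⟨hax, hbx⟩
  have hrep : ∀ c ∈ Q n, ∃ l : List ℕ, l.Pairwise (· > ·) ∧ (∀ i ∈ l, n ≤ i) ∧
      (l.map γ).prod = c := by
    intro c hc
    rw [hQ n] at hc
    rcases hc with rfl | ⟨l, -, hchain, hln, rfl⟩
    · exact ⟨[], List.Pairwise.nil, by simp, rfl⟩
    · exact ⟨l, List.isChain_iff_pairwise.mp hchain, hln, rfl⟩
  obtain ⟨la, hla, hlan, rfl⟩ := hrep a ha
  obtain ⟨lb, hlb, hlbn, rfl⟩ := hrep b hb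
  have hsep := two_mul_pow_lt_wordDist_of_prod_ne hSsym hSgen
    (fun i hi => hγ i (hn.trans hi)) hla hlb hlan hlbn hab
  have htri := wordDist_triangle hSsym hSgen (la.map γ).prod x (lb.map γ).prod
  rw [wordDist_comm hSsym hSgen x] at htri
  omega

/-- with `d_G(e, γ_n) = 3·10^n` and
`Q_n = {e} ∪ {γ_{n_k}⋯γ_{n_1} : n_k > ⋯ > n_1 ≥ n}`, distinct elements of `Q_n` have
disjoint balls of radius `10^n` in the Cayley graph. -/
theorem stmt6 {Γ : Type*} [Group Γ] (S : Set Γ)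
    (hSfin : S.Finite) (hSsym : ∀ s ∈ S, s⁻¹ ∈ S) (hSgen : Subgroup.closure S = ⊤)
    (γ : ℕ → Γ) (hγ : ∀ n : ℕ, 1 ≤ n → wordDist S 1 (γ n) = 3 * 10 ^ n)
    (A : ℕ → Set Γ) (hA0 : A 0 = {1})
    (hAn : ∀ n : ℕ, A (n + 1) = A n ∪ (γ (n + 1)) • A n)
    (Q : ℕ → Set Γ)
    (hQ : ∀ n : ℕ, Q n = {1} ∪ {g | ∃ l : List ℕ,
      l ≠ [] ∧ l.Chain' (· > ·) ∧ (∀ i ∈ l, n ≤ i) ∧ (l.map γ).prod = g}) :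
    ∀ n : ℕ, 1 ≤ n → ∀ a ∈ Q n, ∀ b ∈ Q n, a ≠ b →
      ∀ x : Γ, ¬ (wordDist S a x ≤ 10 ^ n ∧ wordDist S b x ≤ 10 ^ n) :=
  stmt6_general S hSsym hSgen γ hγ Q hQ
end
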